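/- The function F(κ) = 1 − exp(−λ sqrt(κ I₁(κ)/I₀(κ) − log I₀(κ))) for λ > 0 is a cumulative distribution function on [0, ∞): F(0) = 0, F is monotone nondecreasing, and F(κ) → 1 as κ → ∞. -/

import Mathlib

/-!
`log I₀` is, up to the constant `log 2π`, the cumulant generating function of `cos` under Lebesgue
measure on `(0, 2π]`; so it is convex, with derivative `I₁ / I₀`, and the divergence
`κ I₁/I₀ - log I₀` is the gap `κ f'(κ) - f(κ)` of the convex function `f = log I₀`. For any
differentiable `f` with monotone derivative this gap is nondecreasing on `[0, ∞)` and dominates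
`f(κ) - 2 f(κ/2)`. Laplace-type bounds `e^(κ-1/2)/√κ ≤ 2π I₀(κ) ≤ e^κ √(π³/(2κ))` (for `κ ≥ 1`)
show that `I₀(κ) / I₀(κ/2)²` grows like `√κ`, so the divergence tends to infinity.
-/

open Real MeasureTheory Filter

noncomputable def besselI0 (κ : ℝ) : ℝ :=
  (1 / (2 * Real.pi)) * ∫ t in (0:ℝ)..(2 * Real.pi), Real.exp (κ * Real.cos t)

noncomputable def besselI1 (κ : ℝ) : ℝ :=
  (1 / (2 * Real.pi)) * ∫ t in (0:ℝ)..(2 * Real.pi), Real.cos t * Real.exp (κ * Real.cos t)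

open Set ProbabilityTheory

section MonotoneDeriv

variable {f f' : ℝ → ℝ}

theorem sub_le_mul_sub_of_hasDerivAt_of_monotone (hf : ∀ x, HasDerivAt f (f' x) x)
    (hf' : Monotone f') {a b : ℝ} (hab : a ≤ b) : f b - f a ≤ f' b * (b - a) := by
  rcases hab.eq_or_lt with rfl | hab
  · simp
  obtain ⟨c, hc, hslope⟩ := exists_hasDerivAt_eq_slope f f' hab
    (fun x _ => (hf x).continuousAt.continuousWithinAt) (fun x _ => hf x)
  rw [eq_div_iff (sub_pos.2 hab).ne'] at hslope
  rw [← hslope]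
  exact mul_le_mul_of_nonneg_right (hf' hc.2.le) (sub_pos.2 hab).le

theorem monotoneOn_mul_sub_of_hasDerivAt_of_monotone (hf : ∀ x, HasDerivAt f (f' x) x)
    (hf' : Monotone f') :
    MonotoneOn (fun x => x * f' x - f x) (Ici 0) := by
  intro a ha b _ hab
  have hsec := sub_le_mul_sub_of_hasDerivAt_of_monotone hf hf' hab
  have hmono : 0 ≤ a * (f' b - f' a) := mul_nonneg ha (sub_nonneg.2 (hf' hab))
  dsimp only
  nlinarith

theorem sub_two_mul_half_le_of_hasDerivAt_of_monotone (hf : ∀ x, HasDerivAt f (f' x) x)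
    (hf' : Monotone f') {x : ℝ} (hx : 0 ≤ x) : f x - 2 * f (x / 2) ≤ x * f' x - f x := by
  have := sub_le_mul_sub_of_hasDerivAt_of_monotone hf hf' (half_le_self hx)
  linarith

end MonotoneDeriv

section Cgf

variable {Ω : Type*} {m : MeasurableSpace Ω} {X : Ω → ℝ} {μ : Measure Ω}

theorem monotoneOn_deriv_cgf :
    MonotoneOn (deriv (cgf X μ)) (interior (integrableExpSet X μ)) := by
  have hdiff : DifferentiableOn ℝ (deriv (cgf X μ)) (interior (integrableExpSet X μ)) :=
    fun t ht => ((analyticAt_cgf ht).deriv).differentiableAt.differentiableWithinAt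
  refine monotoneOn_of_deriv_nonneg (convex_integrableExpSet.interior) hdiff.continuousOn
    (hdiff.mono interior_subset) fun t ht => ?_
  rw [interior_interior] at ht
  have hvar := variance_tilted_mul ht
  rw [iteratedDeriv_succ, iteratedDeriv_one] at hvar
  exact hvar ▸ variance_nonneg _ _

end Cgf

theorem integrableExpSet_cos_eq_univ :
    integrableExpSet cos (volume.restrict (Ioc 0 (2 * π))) = univ :=
  eq_univ_of_forall fun κ => (by fun_prop : Continuous fun t => exp (κ * cos t)).integrableOn_Ioc

theorem besselI0_eq_mgf (κ : ℝ) :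
    besselI0 κ = mgf cos (volume.restrict (Ioc 0 (2 * π))) κ / (2 * π) := by
  rw [besselI0, intervalIntegral.integral_of_le (by positivity), mgf]
  ring

theorem besselI1_div_besselI0 (κ : ℝ) :
    besselI1 κ / besselI0 κ = deriv (cgf cos (volume.restrict (Ioc 0 (2 * π)))) κ := by
  rw [deriv_cgf (by simp [integrableExpSet_cos_eq_univ]), besselI0_eq_mgf, besselI1,
    intervalIntegral.integral_of_le (by positivity), one_div_mul_eq_div,
    div_div_div_cancel_right₀ (by positivity)]

theorem besselI0_pos (κ : ℝ) : 0 < besselI0 κ := by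
  have hcont : Continuous fun t => exp (κ * cos t) := by fun_prop
  exact mul_pos (by positivity) (intervalIntegral.intervalIntegral_pos_of_pos
    (hcont.intervalIntegrable _ _) (fun _ => exp_pos _) (by positivity))

theorem besselI0_zero : besselI0 0 = 1 := by
  rw [besselI0]
  simp only [zero_mul, exp_zero, intervalIntegral.integral_const, sub_zero, smul_eq_mul, mul_one]
  field_simp

theorem log_besselI0_eq_cgf (κ : ℝ) :
    log (besselI0 κ) = cgf cos (volume.restrict (Ioc 0 (2 * π))) κ - log (2 * π) := by
  have hmgf : mgf cos (volume.restrict (Ioc 0 (2 * π))) κ = 2 * π * besselI0 κ := by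
    rw [besselI0_eq_mgf]; field_simp
  rw [cgf, hmgf, log_mul (by positivity) (besselI0_pos κ).ne']
  ring

theorem hasDerivAt_log_besselI0 (κ : ℝ) :
    HasDerivAt (fun κ => log (besselI0 κ)) (besselI1 κ / besselI0 κ) κ := by
  simp_rw [log_besselI0_eq_cgf, besselI1_div_besselI0]
  exact (analyticAt_cgf (by simp [integrableExpSet_cos_eq_univ])).differentiableAt.hasDerivAt
    |>.sub_const _

theorem monotone_besselI1_div_besselI0 : Monotone fun κ => besselI1 κ / besselI0 κ := by
  have := monotoneOn_deriv_cgf (X := cos) (μ := volume.restrict (Ioc 0 (2 * π)))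
  rw [integrableExpSet_cos_eq_univ, interior_univ, monotoneOn_univ] at this
  simpa only [besselI1_div_besselI0] using this

theorem intervalIntegral_exp_neg_mul_sq_le {a b c : ℝ} (hab : a ≤ b) (hc : 0 < c) :
    ∫ t in a..b, exp (-c * t ^ 2) ≤ √(π / c) := by
  rw [intervalIntegral.integral_of_le hab, ← integral_gaussian]
  exact setIntegral_le_integral (integrable_exp_neg_mul_sq hc)
    (Eventually.of_forall fun _ => (exp_pos _).le)

theorem integral_exp_mul_cos_le_exp_mul_sqrt {κ : ℝ} (hκ : 0 < κ) :
    ∫ t in (0:ℝ)..2 * π, exp (κ * cos t) ≤ exp κ * √(π ^ 3 / (2 * κ)) := by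
  have hshift : ∫ t in (0:ℝ)..2 * π, exp (κ * cos t) = ∫ t in -π..π, exp (κ * cos t) := by
    have := (cos_periodic.comp fun y => exp (κ * y)).intervalIntegral_add_eq 0 (-π)
    rwa [zero_add, show -π + 2 * π = π by ring] at this
  have hb : 0 < 2 * κ / π ^ 2 := by positivity
  calc ∫ t in (0:ℝ)..2 * π, exp (κ * cos t)
      ≤ ∫ t in -π..π, exp κ * exp (-(2 * κ / π ^ 2) * t ^ 2) := by
        rw [hshift]
        have hcont : Continuous fun t => exp (κ * cos t) := by fun_prop
        have hcont' : Continuous fun t => exp κ * exp (-(2 * κ / π ^ 2) * t ^ 2) := by fun_prop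
        refine intervalIntegral.integral_mono_on (by linarith [pi_pos])
          (hcont.intervalIntegrable _ _) (hcont'.intervalIntegrable _ _) fun t ht => ?_
        rw [← exp_add, exp_le_exp]
        have hcos := cos_le_one_sub_mul_cos_sq (abs_le.2 ht)
        calc κ * cos t ≤ κ * (1 - 2 / π ^ 2 * t ^ 2) := mul_le_mul_of_nonneg_left hcos hκ.le
          _ = κ + -(2 * κ / π ^ 2) * t ^ 2 := by ring
    _ = exp κ * ∫ t in -π..π, exp (-(2 * κ / π ^ 2) * t ^ 2) :=
        intervalIntegral.integral_const_mul _ _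
    _ ≤ exp κ * √(π / (2 * κ / π ^ 2)) :=
        mul_le_mul_of_nonneg_left (intervalIntegral_exp_neg_mul_sq_le (by linarith [pi_pos]) hb)
          (exp_pos _).le
    _ = exp κ * √(π ^ 3 / (2 * κ)) := by
        congr 2
        field_simp

theorem exp_sub_half_div_sqrt_le_integral_exp_mul_cos {κ : ℝ} (hκ : 1 ≤ κ) :
    exp (κ - 1 / 2) / √κ ≤ ∫ t in (0:ℝ)..2 * π, exp (κ * cos t) := by
  have hκ0 : 0 < κ := by linarith
  set a := (√κ)⁻¹ with ha_def
  have ha : 0 < a := by positivity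
  have ha_sq : κ * a ^ 2 = 1 := by
    rw [ha_def, inv_pow, sq_sqrt hκ0.le, mul_inv_cancel₀ hκ0.ne']
  have ha_le : a ≤ 2 * π := by
    have : a ≤ 1 := inv_le_one_of_one_le₀ (one_le_sqrt.2 hκ)
    linarith [pi_gt_three]
  have hcont : Continuous fun t => exp (κ * cos t) := by fun_prop
  calc exp (κ - 1 / 2) / √κ = ∫ _ in (0:ℝ)..a, exp (κ - 1 / 2) := by
        rw [intervalIntegral.integral_const, smul_eq_mul, sub_zero, ha_def, inv_mul_eq_div]
    _ ≤ ∫ t in (0:ℝ)..a, exp (κ * cos t) := by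
        refine intervalIntegral.integral_mono_on ha.le intervalIntegrable_const
          (hcont.intervalIntegrable _ _) fun t ht => exp_le_exp.2 ?_
        have hcos := one_sub_sq_div_two_le_cos (x := t)
        have ht2 : κ * t ^ 2 ≤ 1 := ha_sq ▸ mul_le_mul_of_nonneg_left
          (pow_le_pow_left₀ ht.1 ht.2 2) hκ0.le
        nlinarith
    _ ≤ ∫ t in (0:ℝ)..2 * π, exp (κ * cos t) :=
        intervalIntegral.integral_mono_interval le_rfl ha.le ha_le
          (Eventually.of_forall fun _ => (exp_pos _).le) (hcont.intervalIntegrable _ _)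

theorem sqrt_le_besselI0_div_sq_half {κ : ℝ} (hκ : 1 ≤ κ) :
    2 * exp (-(1 / 2)) / π ^ 2 * √κ ≤ besselI0 κ / besselI0 (κ / 2) ^ 2 := by
  have hκ0 : 0 < κ := by linarith
  have hlow : exp (κ - 1 / 2) / √κ / (2 * π) ≤ besselI0 κ := by
    rw [besselI0, one_div_mul_eq_div]
    gcongr
    exact exp_sub_half_div_sqrt_le_integral_exp_mul_cos hκ
  have hup :
      besselI0 (κ / 2) ^ 2 ≤ (exp (κ / 2) * √(π ^ 3 / (2 * (κ / 2))) / (2 * π)) ^ 2 := by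
    refine pow_le_pow_left₀ (besselI0_pos _).le ?_ 2
    rw [besselI0, one_div_mul_eq_div]
    gcongr
    exact integral_exp_mul_cos_le_exp_mul_sqrt (by positivity)
  calc 2 * exp (-(1 / 2)) / π ^ 2 * √κ
      = exp (κ - 1 / 2) / √κ / (2 * π) /
          (exp (κ / 2) * √(π ^ 3 / (2 * (κ / 2))) / (2 * π)) ^ 2 := by
        have hs : 0 < √κ := sqrt_pos.2 hκ0
        rw [show π ^ 3 / (2 * (κ / 2)) = π ^ 3 / κ by ring, div_pow, mul_pow,
          sq_sqrt (by positivity), ← exp_nat_mul, sub_eq_add_neg, exp_add]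
        field_simp
        rw [sq_sqrt hκ0.le]
        push_cast
        ring_nf
    _ ≤ besselI0 κ / besselI0 (κ / 2) ^ 2 :=
        div_le_div₀ (besselI0_pos _).le hlow (pow_pos (besselI0_pos _) 2) hup

theorem tendsto_besselI0_div_sq_half :
    Tendsto (fun κ => besselI0 κ / besselI0 (κ / 2) ^ 2) atTop atTop :=
  tendsto_atTop_mono' atTop ((eventually_ge_atTop 1).mono fun _ => sqrt_le_besselI0_div_sq_half)
    (tendsto_sqrt_atTop.const_mul_atTop (by positivity))

noncomputable def vonMisesKL (κ : ℝ) : ℝ := κ * besselI1 κ / besselI0 κ - log (besselI0 κ)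

theorem vonMisesKL_eq (κ : ℝ) :
    vonMisesKL κ = κ * (besselI1 κ / besselI0 κ) - log (besselI0 κ) := by
  rw [vonMisesKL, mul_div_assoc]

theorem vonMisesKL_zero : vonMisesKL 0 = 0 := by
  simp [vonMisesKL, besselI0_zero]

theorem monotoneOn_vonMisesKL : MonotoneOn vonMisesKL (Ici 0) := by
  rw [show vonMisesKL = _ from funext vonMisesKL_eq]
  exact monotoneOn_mul_sub_of_hasDerivAt_of_monotone hasDerivAt_log_besselI0
    monotone_besselI1_div_besselI0

theorem tendsto_vonMisesKL_atTop : Tendsto vonMisesKL atTop atTop := by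
  refine tendsto_atTop_mono' atTop ?_ (tendsto_log_atTop.comp tendsto_besselI0_div_sq_half)
  filter_upwards [eventually_ge_atTop 0] with κ hκ
  rw [vonMisesKL_eq, Function.comp_apply, log_div (besselI0_pos _).ne'
    (pow_ne_zero _ (besselI0_pos _).ne'), log_pow, Nat.cast_ofNat]
  exact sub_two_mul_half_le_of_hasDerivAt_of_monotone hasDerivAt_log_besselI0
    monotone_besselI1_div_besselI0 hκ

theorem monotone_one_sub_exp_neg_mul_sqrt {c : ℝ} (hc : 0 ≤ c) :
    Monotone fun y => 1 - exp (-c * √y) := fun a b hab => by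
  simp only [sub_le_sub_iff_left, exp_le_exp, neg_mul, neg_le_neg_iff]
  exact mul_le_mul_of_nonneg_left (sqrt_le_sqrt hab) hc

theorem tendsto_one_sub_exp_neg_mul_sqrt_atTop {c : ℝ} (hc : 0 < c) :
    Tendsto (fun y => 1 - exp (-c * √y)) atTop (nhds 1) := by
  simpa using tendsto_const_nhds.sub
    (tendsto_exp_atBot.comp (tendsto_sqrt_atTop.const_mul_atTop_of_neg (neg_neg_of_pos hc)))

theorem pc_prior_vm_uniform_cdf (lam : ℝ) (hlam : 0 < lam) :
    let F : ℝ → ℝ := fun κ =>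
      1 - Real.exp (-lam * Real.sqrt (κ * besselI1 κ / besselI0 κ - Real.log (besselI0 κ)))
    F 0 = 0 ∧ MonotoneOn F (Set.Ici (0:ℝ)) ∧ Tendsto F atTop (nhds 1) := by
  intro F
  refine ⟨?_, ?_, ?_⟩
  · change 1 - exp (-lam * √(vonMisesKL 0)) = 0
    simp [vonMisesKL_zero]
  · exact (monotone_one_sub_exp_neg_mul_sqrt hlam.le).comp_monotoneOn monotoneOn_vonMisesKL
  · exact (tendsto_one_sub_exp_neg_mul_sqrt_atTop hlam).comp tendsto_vonMisesKL_atTop
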